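/- arXiv:2105.04426 — 2 statements merged into one kernel-verified Lean document; each statement's English description precedes it below -/
import Mathlib

section
/- Let V and W be graded vector spaces of finite type with V_0 and W_0 nonzero (i.e., dim V_0 ≥ 1 and dim W_0 ≥ 1). Then the log index of the graded tensor product V ⊗ W, where dim (V⊗W)_n = Σ_{i+j=n} (dim V_i)(dim W_j), equals the maximum of the log indices of V and W. -/
/-!
Since `W₀ ≠ 0`, `dim V_n ≤ dim V_n · dim W₀ ≤ dim (V⊗W)_n`, and symmetrically for `W`, which
gives `≥`. Conversely, if `c` exceeds both log indices then `dim V_i ≤ C e^{ci}` and `dim W_j ≤ D e^{cj}` for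
all `i, j`, so `dim (V⊗W)_n ≤ C D (n + 1) e^{cn}`; the polynomial factor `n + 1` does not change
the log index, which is therefore at most `c`.
-/

open Filter Set
open scoped ENNReal BigOperators

/-- The log index of a sequence of nonnegative reals (dimensions of a graded
vector space): `limsup_i (log a_i)/i`, with the convention `log 0 = -∞`,
computed in the extended reals. -/
noncomputable def logIndex (a : ℕ → ℝ) : EReal :=
  Filter.limsup (fun i => ENNReal.log (ENNReal.ofReal (a i)) / ((i : ℝ) : EReal)) Filter.atTop

/-- The radius of convergence of `Σ a_i z^i`, via Cauchy–Hadamard: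
`ρ = 1 / limsup a_i^{1/i}` in `ℝ≥0∞`. -/
noncomputable def radius (a : ℕ → ℝ) : ℝ≥0∞ :=
  1 / Filter.limsup (fun n => ENNReal.ofReal (a n ^ ((n : ℝ)⁻¹))) Filter.atTop

open Real Topology Finset.HasAntidiagonal

lemma logIndex_mono {a b : ℕ → ℝ} (h : ∀ n, a n ≤ b n) : logIndex a ≤ logIndex b :=
  limsup_le_limsup (.of_forall fun n => EReal.div_le_div_right_of_nonneg (by positivity)
    (ENNReal.log_monotone (ENNReal.ofReal_le_ofReal (h n))))

lemma logIndex_eq_of_tendsto {a : ℕ → ℝ} {c : ℝ} (ha : ∀ᶠ n in atTop, 0 < a n)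
    (h : Tendsto (fun n => log (a n) / n) atTop (𝓝 c)) : logIndex a = c := by
  have hlim := ((continuous_coe_real_ereal.tendsto c).comp h).limsup_eq
  refine (limsup_congr ?_).trans hlim
  filter_upwards [ha] with n hn
  rw [Function.comp_apply, ENNReal.log_ofReal_of_pos hn, EReal.coe_div]

lemma tendsto_log_natCast_add_one_div :
    Tendsto (fun n : ℕ => log (n + 1) / n) atTop (𝓝 0) := by
  have h := (tendsto_pow_log_div_mul_add_atTop 1 (-1) 1 one_ne_zero).comp
    (tendsto_atTop_add_const_right _ 1 (tendsto_natCast_atTop_atTop (R := ℝ)))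
  refine h.congr fun n => ?_
  simp

lemma logIndex_mul_natCast_add_one_mul_exp {K : ℝ} (hK : 0 < K) (c : ℝ) :
    logIndex (fun n => K * (n + 1) * exp (c * n)) = c := by
  refine logIndex_eq_of_tendsto (.of_forall fun n => by positivity) ?_
  have h := ((tendsto_const_div_atTop_nhds_zero_nat (log K)).add
    tendsto_log_natCast_add_one_div).add_const c
  rw [zero_add, zero_add] at h
  refine h.congr' ?_
  filter_upwards [eventually_ne_atTop 0] with n hn
  have hn' : (n : ℝ) ≠ 0 := Nat.cast_ne_zero.2 hn
  rw [log_mul (by positivity) (exp_ne_zero _), log_mul hK.ne' (by positivity), log_exp]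
  field_simp

lemma le_exp_mul_of_log_ofReal_div_lt {x c : ℝ} {n : ℕ} (hn : 0 < n)
    (h : ENNReal.log (ENNReal.ofReal x) / ((n : ℝ) : EReal) < c) : x ≤ exp (c * n) := by
  rcases le_or_gt x 0 with hx | hx
  · exact hx.trans (exp_pos _).le
  rw [ENNReal.log_ofReal_of_pos hx, ← EReal.coe_div, EReal.coe_lt_coe_iff,
    div_lt_iff₀ (by positivity), log_lt_iff_lt_exp hx] at h
  exact h.le

lemma exists_le_mul_exp_of_logIndex_lt {a : ℕ → ℝ} {c : ℝ} (h : logIndex a < c) :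
    ∃ C, 0 < C ∧ ∀ n, a n ≤ C * exp (c * n) := by
  have hev : ∀ᶠ n in atTop, a n / exp (c * n) ≤ 1 := by
    filter_upwards [eventually_lt_of_limsup_lt h, eventually_gt_atTop 0] with n hn hpos
    exact (div_le_one (exp_pos _)).2 (le_exp_mul_of_log_ofReal_div_lt hpos hn)
  obtain ⟨M, hM⟩ := (isBoundedUnder_of_eventually_le hev).bddAbove_range
  refine ⟨max M 1, by positivity, fun n => ?_⟩
  rw [← div_le_iff₀ (exp_pos _)]
  exact (hM (mem_range_self n)).trans (le_max_left _ _)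

lemma sum_antidiagonal_le_of_le_mul_exp {a b : ℕ → ℝ} {C D c : ℝ} (ha₀ : ∀ n, 0 ≤ a n)
    (hb₀ : ∀ n, 0 ≤ b n) (ha : ∀ n, a n ≤ C * exp (c * n)) (hb : ∀ n, b n ≤ D * exp (c * n))
    (n : ℕ) :
    ∑ p ∈ antidiagonal n, a p.1 * b p.2 ≤ C * D * (n + 1) * exp (c * n) := by
  have hterm : ∀ p ∈ antidiagonal n, a p.1 * b p.2 ≤ C * D * exp (c * n) := by
    intro p hp
    have hexp : exp (c * p.1) * exp (c * p.2) = exp (c * n) := by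
      rw [← exp_add, ← mem_antidiagonal.1 hp, Nat.cast_add, mul_add]
    calc a p.1 * b p.2 ≤ (C * exp (c * p.1)) * (D * exp (c * p.2)) :=
          mul_le_mul (ha _) (hb _) (hb₀ _) ((ha₀ _).trans (ha _))
      _ = C * D * exp (c * n) := by rw [← hexp]; ring
  calc ∑ p ∈ antidiagonal n, a p.1 * b p.2 ≤ ∑ _p ∈ antidiagonal n, C * D * exp (c * n) :=
        Finset.sum_le_sum hterm
    _ = C * D * (n + 1) * exp (c * n) := by
        rw [Finset.sum_const, Finset.Nat.card_antidiagonal, nsmul_eq_mul]; push_cast; ring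

lemma mul_le_sum_antidiagonal (a b : ℕ → ℕ) {i j n : ℕ} (h : i + j = n) :
    a i * b j ≤ ∑ p ∈ antidiagonal n, a p.1 * b p.2 :=
  Finset.single_le_sum (f := fun p : ℕ × ℕ => a p.1 * b p.2) (fun _ _ => Nat.zero_le _)
    (mem_antidiagonal.2 h : (i, j) ∈ antidiagonal n)

/-- If `V` and `W` are graded vector spaces of finite type with `V₀, W₀` nonzero,
then the log index of the graded tensor product, where
`dim (V⊗W)_n = Σ_{i+j=n} (dim V_i)(dim W_j)`, equals the maximum of the log
indices of `V` and `W`. -/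
theorem stmt4 (V W : ℕ → ℕ) (hV : 1 ≤ V 0) (hW : 1 ≤ W 0) :
    logIndex (fun n => ((∑ p ∈ Finset.HasAntidiagonal.antidiagonal n, V p.1 * W p.2 : ℕ) : ℝ)) =
      max (logIndex (fun i => (V i : ℝ))) (logIndex (fun i => (W i : ℝ))) := by
  refine le_antisymm (EReal.le_of_forall_lt_iff_le.1 fun c hc => ?_) (max_le ?_ ?_)
  · obtain ⟨C, hC, hVC⟩ := exists_le_mul_exp_of_logIndex_lt ((le_max_left _ _).trans_lt hc)
    obtain ⟨D, hD, hWD⟩ := exists_le_mul_exp_of_logIndex_lt ((le_max_right _ _).trans_lt hc)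
    rw [← logIndex_mul_natCast_add_one_mul_exp (mul_pos hC hD) c]
    refine logIndex_mono fun n => ?_
    push_cast
    exact sum_antidiagonal_le_of_le_mul_exp (fun _ => Nat.cast_nonneg _)
      (fun _ => Nat.cast_nonneg _) hVC hWD n
  · refine logIndex_mono fun n => ?_
    exact_mod_cast (Nat.le_mul_of_pos_right _ hW).trans (mul_le_sum_antidiagonal V W (add_zero n))
  · refine logIndex_mono fun n => ?_
    exact_mod_cast (Nat.le_mul_of_pos_left _ hV).trans (mul_le_sum_antidiagonal V W (zero_add n))
end

section
/- Let f(z) = Σ_{i≥1} a_i z^i be a power series with nonnegative real coefficients and a_0 = 0, with radius of convergence ρ_f ∈ (0,∞), and suppose Σ_i a_i ρ_f^i = ∞. Let k ≥ 1 and define g to be the formal power series g(z) = 1/(1 − z^k f(z)) = Σ_{m≥0} (z^k f(z))^m (well-defined since z^k f(z) has zero constant term). Then the radius of convergence of g is strictly less than ρ_f. -/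
/-!
Write `φ = z^k f`. The series `ψ = (1 - φ)⁻¹` satisfies `ψ = 1 + φ ψ`, so its coefficients are
nonnegative. Because `Σ a_i ρ^i = ∞`, some partial sum makes `ρ^k Σ_{i<N} a_i ρ^i > 1`, and by
continuity the same holds at some `r < ρ`; thus `φ(r) > 1`, where `φ(r)` converges since `r < ρ`.
If `ψ(r)` converged too, the Cauchy product would give `ψ(r) = 1 + φ(r) ψ(r) > ψ(r)`. Hence `ψ`
diverges at `r`, and its radius is at most `r < ρ`. To pass between the Cauchy–Hadamard radius and
summability we identify it with `FormalMultilinearSeries.radius` of the scalar series.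
-/

open Filter Set
open scoped ENNReal BigOperators

open PowerSeries Finset Topology

lemma radius_eq_radius_ofScalars {a : ℕ → ℝ} (ha : ∀ n, 0 ≤ a n) :
    radius a = (FormalMultilinearSeries.ofScalars ℝ a).radius := by
  rw [FormalMultilinearSeries.radius_eq_liminf, radius, one_div, ENNReal.inv_limsup]
  congr! 2 with n
  rw [one_div, one_div, ENNReal.ofReal, Real.toNNReal_rpow_of_nonneg (ha n)]
  have hnorm : ‖FormalMultilinearSeries.ofScalars ℝ a n‖₊ = (a n).toNNReal := by
    ext
    simp [ha n]
  rw [hnorm]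

lemma summable_mul_pow_of_lt_radius {a : ℕ → ℝ} (ha : ∀ n, 0 ≤ a n) {r : ℝ} (hr : 0 ≤ r)
    (h : ENNReal.ofReal r < radius a) : Summable fun n => a n * r ^ n := by
  rw [radius_eq_radius_ofScalars ha] at h
  have := (FormalMultilinearSeries.ofScalars ℝ a).summable_norm_mul_pow h
  simpa [abs_of_nonneg (ha _), Real.coe_toNNReal r hr] using this

lemma summable_mul_zero_pow (a : ℕ → ℝ) : Summable fun n => a n * 0 ^ n :=
  (hasSum_single 0 fun n hn => by simp [hn]).summable

section InvOneSub

variable {K : Type*} [Field K] {φ : K⟦X⟧}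

lemma inv_one_sub_eq_one_add_mul_inv (hφ : constantCoeff φ = 0) :
    (1 - φ)⁻¹ = 1 + φ * (1 - φ)⁻¹ := by
  linear_combination PowerSeries.mul_inv_cancel (1 - φ) (by simp [hφ])

lemma coeff_inv_one_sub (hφ : constantCoeff φ = 0) (n : ℕ) :
    coeff n (1 - φ)⁻¹ = (if n = 0 then 1 else 0) +
      ∑ p ∈ antidiagonal n, coeff p.1 φ * coeff p.2 (1 - φ)⁻¹ := by
  conv_lhs => rw [inv_one_sub_eq_one_add_mul_inv hφ]
  rw [map_add, coeff_one, coeff_mul]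

lemma coeff_inv_one_sub_nonneg [LinearOrder K] [IsStrictOrderedRing K]
    (hφ : constantCoeff φ = 0) (hnonneg : ∀ n, 0 ≤ coeff n φ) (n : ℕ) :
    0 ≤ coeff n (1 - φ)⁻¹ := by
  induction n using Nat.strong_induction_on with
  | _ n ih =>
    rw [coeff_inv_one_sub hφ]
    refine add_nonneg (by split_ifs <;> simp) (sum_nonneg fun p hp => ?_)
    rcases Nat.eq_zero_or_pos p.1 with h | h
    · simp [h, hφ]
    · exact mul_nonneg (hnonneg _) (ih _ (by have := mem_antidiagonal.1 hp; omega))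

end InvOneSub

lemma not_summable_coeff_inv_one_sub_mul_pow {φ : ℝ⟦X⟧} (hφ : constantCoeff φ = 0)
    (hnonneg : ∀ n, 0 ≤ coeff n φ) {r B : ℝ} (hr : 0 ≤ r)
    (hB : HasSum (fun n => coeff n φ * r ^ n) B) (hB1 : 1 < B) :
    ¬ Summable fun n => coeff n (1 - φ)⁻¹ * r ^ n := by
  intro hG
  set G := ∑' n, coeff n (1 - φ)⁻¹ * r ^ n
  have hψ := coeff_inv_one_sub_nonneg hφ hnonneg
  have hcauchy := tsum_mul_tsum_eq_tsum_sum_antidiagonal_of_summable_norm hB.summable.norm hG.norm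
  have hprod := summable_norm_sum_mul_antidiagonal_of_summable_norm hB.summable.norm hG.norm
  have hG_eq : HasSum (fun n => coeff n (1 - φ)⁻¹ * r ^ n) (1 + B * G) := by
    rw [← hB.tsum_eq, hcauchy]
    convert (hasSum_ite_eq 0 (1 : ℝ)).add hprod.of_norm.hasSum using 2 with n
    rw [coeff_inv_one_sub hφ, add_mul, sum_mul]
    congr 1
    · split_ifs with h <;> simp [h]
    · refine sum_congr rfl fun p hp => ?_
      rw [← mem_antidiagonal.1 hp, pow_add]
      ring
  have hG0 : 0 ≤ G := tsum_nonneg fun n => mul_nonneg (hψ n) (pow_nonneg hr n)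
  -- `G = 1 + B * G` with `B > 1` would force `G < 0`.
  nlinarith [hG_eq.tsum_eq]

lemma exists_nonneg_lt_one_lt_pow_mul_sum {a : ℕ → ℝ} (ha : ∀ n, 0 ≤ a n) {ρ : ℝ} (hρ : 0 < ρ)
    (hdiv : ¬ Summable fun i => a i * ρ ^ i) (k : ℕ) :
    ∃ r, 0 ≤ r ∧ r < ρ ∧ ∃ N, 1 < r ^ k * ∑ i ∈ range N, a i * r ^ i := by
  have htend : Tendsto (fun N => ρ ^ k * ∑ i ∈ range N, a i * ρ ^ i) atTop atTop :=
    ((not_summable_iff_tendsto_nat_atTop_of_nonneg fun i => mul_nonneg (ha i)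
      (pow_nonneg hρ.le i)).1 hdiv).const_mul_atTop (pow_pos hρ k)
  obtain ⟨N, hN⟩ := (htend.eventually_gt_atTop 1).exists
  have hcont : Continuous fun r : ℝ => r ^ k * ∑ i ∈ range N, a i * r ^ i := by fun_prop
  have hnear : ∀ᶠ r in 𝓝[<] ρ, 1 < r ^ k * ∑ i ∈ range N, a i * r ^ i :=
    nhdsWithin_le_nhds ((hcont.tendsto ρ).eventually (lt_mem_nhds hN))
  obtain ⟨r, hr, hrρ⟩ := (hnear.and (Ioo_mem_nhdsLT hρ)).exists
  exact ⟨r, hrρ.1.le, hrρ.2, N, hr⟩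

lemma hasSum_coeff_X_pow_mul_mk_mul_pow {a : ℕ → ℝ} {r : ℝ} (h : Summable fun n => a n * r ^ n)
    (k : ℕ) :
    HasSum (fun n => coeff n (X ^ k * PowerSeries.mk a) * r ^ n) (r ^ k * ∑' n, a n * r ^ n) := by
  have hhead : ∑ i ∈ range k, coeff i (X ^ k * PowerSeries.mk a) * r ^ i = 0 :=
    sum_eq_zero fun i hi => by simp [coeff_X_pow_mul', mem_range.1 hi]
  have hshift : (fun n => coeff (n + k) (X ^ k * PowerSeries.mk a) * r ^ (n + k)) =
      fun n => r ^ k * (a n * r ^ n) := by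
    funext n
    rw [coeff_X_pow_mul, coeff_mk, pow_add]
    ring
  rw [← hasSum_nat_add_iff' k, hhead, sub_zero, hshift]
  exact h.hasSum.mul_left _

theorem stmt5_general (a : ℕ → ℝ) (ha : ∀ i, 0 ≤ a i)
    (hdiv : ¬ Summable (fun i => a i * (radius a).toReal ^ i))
    (k : ℕ) (hk : 1 ≤ k) :
    radius (fun n =>
        PowerSeries.coeff n ((1 - PowerSeries.X ^ k * PowerSeries.mk a)⁻¹)) <
      radius a := by
  have hρ : 0 < (radius a).toReal := ENNReal.toReal_nonneg.lt_of_ne' fun h =>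
    hdiv (by rw [h]; exact summable_mul_zero_pow a)
  obtain ⟨r, hr, hrρ, N, hN⟩ := exists_nonneg_lt_one_lt_pow_mul_sum ha hρ hdiv k
  have hrad : ENNReal.ofReal r < radius a := by
    rw [← ENNReal.ofReal_toReal (ENNReal.toReal_pos_iff.1 hρ).2.ne]
    exact (ENNReal.ofReal_lt_ofReal_iff hρ).2 hrρ
  have hsum := summable_mul_pow_of_lt_radius ha hr hrad
  have hφ0 : constantCoeff (X ^ k * PowerSeries.mk a) = 0 := by
    simp [zero_pow (by omega : k ≠ 0)]
  have hφ : ∀ n, 0 ≤ coeff n (X ^ k * PowerSeries.mk a) := fun n => by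
    rw [coeff_X_pow_mul']; split_ifs <;> simp [ha]
  have hB : 1 < r ^ k * ∑' n, a n * r ^ n := hN.trans_le <| by
    gcongr
    exact hsum.sum_le_tsum _ fun i _ => mul_nonneg (ha i) (pow_nonneg hr i)
  have hg := not_summable_coeff_inv_one_sub_mul_pow hφ0 hφ hr
    (hasSum_coeff_X_pow_mul_mk_mul_pow hsum k) hB
  calc _ ≤ ENNReal.ofReal r := not_lt.1 fun h =>
        hg (summable_mul_pow_of_lt_radius (coeff_inv_one_sub_nonneg hφ0 hφ) hr h)
    _ < radius a := hrad

/-- If `f(z) = Σ_{i≥1} a_i z^i` has nonnegative coefficients, zero constant term,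
radius of convergence `ρ_f ∈ (0,∞)`, and `Σ a_i ρ_f^i = ∞`, then for `k ≥ 1` the
power series `g = 1/(1 - z^k f(z))` has radius of convergence strictly smaller
than `ρ_f`. -/
theorem stmt5 (a : ℕ → ℝ) (ha : ∀ i, 0 ≤ a i) (ha0 : a 0 = 0)
    (hρ0 : 0 < radius a) (hρtop : radius a < ⊤)
    (hdiv : ¬ Summable (fun i => a i * (radius a).toReal ^ i))
    (k : ℕ) (hk : 1 ≤ k) :
    radius (fun n =>
        PowerSeries.coeff n ((1 - PowerSeries.X ^ k * PowerSeries.mk a)⁻¹)) <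
      radius a :=
  stmt5_general a ha hdiv k hk
end
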